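/- Let S be a set of unit vectors on the unit circle in ℝ² such that the inner product of any two distinct elements is at most 1 − t for some t ∈ (0, 2]. Then the cardinality of S is at most 2π / arccos(1 − t). -/

import Mathlib

open scoped InnerProductSpace

/-! Send a unit vector `u` to the argument of the complex number `u 0 + u 1 * I`, viewed in
`AddCircle (2 * π)`. The distance between the images of unit vectors `u` and `v` is
`arccos ⟪u, v⟫ ≥ arccos (1 - t)`, so the open arcs of length `arccos (1 - t)` centred at the
images are pairwise disjoint, and comparing their total length with `2 * π` gives the bound. -/

open Real Metric MeasureTheory

theorem Set.finite_of_forall_finset_card_le {α : Type*} {s : Set α} {n : ℕ}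
    (h : ∀ F : Finset α, ↑F ⊆ s → F.card ≤ n) : s.Finite := by
  by_contra hs
  obtain ⟨F, hFs, hF⟩ := Set.Infinite.exists_subset_card_eq hs (n + 1)
  have := h F hFs
  omega

namespace AddCircle

variable {T : ℝ} [Fact (0 < T)]

theorem card_mul_le_of_pairwise_le_dist {θ : ℝ} (hθT : θ ≤ T) (F : Finset (AddCircle T))
    (hF : (F : Set (AddCircle T)).Pairwise fun x y => θ ≤ dist x y) :
    F.card * θ ≤ T := by
  have hdisj : (F : Set (AddCircle T)).PairwiseDisjoint (ball · (θ / 2)) := by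
    intro x hx y hy hxy
    refine Set.disjoint_left.mpr fun z hzx hzy => ?_
    have := dist_triangle_left x y z
    linarith [hF hx hy hxy, mem_ball.mp hzx, mem_ball.mp hzy]
  have hball : ∀ x : AddCircle T, volume (ball x (θ / 2)) = ENNReal.ofReal θ := fun x => by
    rw [← measure_congr closedBall_ae_eq_ball, volume_closedBall, mul_div_cancel₀ _ two_ne_zero,
      min_eq_right hθT]
  have hunion := measure_mono (μ := volume) (Set.subset_univ (⋃ x ∈ F, ball x (θ / 2)))
  rw [measure_biUnion_finset hdisj fun x _ => measurableSet_ball, AddCircle.measure_univ] at hunion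
  simp only [hball, Finset.sum_const, nsmul_eq_mul] at hunion
  rwa [← ENNReal.ofReal_natCast, ← ENNReal.ofReal_mul (Nat.cast_nonneg _),
    ENNReal.ofReal_le_ofReal_iff (Fact.out : 0 < T).le] at hunion

theorem finite_and_ncard_mul_le_of_pairwise_le_dist {θ : ℝ} (hθ : 0 < θ) (hθT : θ ≤ T)
    {s : Set (AddCircle T)} (hs : s.Pairwise fun x y => θ ≤ dist x y) :
    s.Finite ∧ s.ncard * θ ≤ T := by
  have hF : ∀ F : Finset (AddCircle T), ↑F ⊆ s → F.card * θ ≤ T := fun F hF =>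
    card_mul_le_of_pairwise_le_dist hθT F (hs.mono hF)
  have hfin : s.Finite := Set.finite_of_forall_finset_card_le (n := ⌊T / θ⌋₊) fun F hFs =>
    Nat.le_floor <| (le_div_iff₀ hθ).mpr (hF F hFs)
  refine ⟨hfin, ?_⟩
  simpa [Set.ncard_eq_toFinset_card _ hfin] using hF hfin.toFinset (by simp)

end AddCircle

theorem arccos_cos_eq_norm_addCircle_coe (x : ℝ) :
    arccos (cos x) = ‖(x : AddCircle (2 * π))‖ := by
  have hπ : ‖(x : AddCircle (2 * π))‖ ≤ π := by
    simpa [abs_of_pos two_pi_pos] using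
      AddCircle.norm_le_half_period (2 * π) (x := (x : AddCircle (2 * π))) two_pi_pos.ne'
  rw [← arccos_cos (norm_nonneg _) hπ, AddCircle.norm_eq, cos_abs, cos_sub_int_mul_two_pi]

theorem Complex.dist_coe_arg_eq_arccos_inner {z w : ℂ} (hz : ‖z‖ = 1) (hw : ‖w‖ = 1) :
    dist (arg z : AddCircle (2 * π)) (arg w) = arccos ⟪z, w⟫_ℝ := by
  have hcos : ⟪z, w⟫_ℝ = Real.cos (arg z - arg w) := by
    rw [Real.cos_sub, cos_arg (norm_ne_zero_iff.mp (hz ▸ one_ne_zero)),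
      cos_arg (norm_ne_zero_iff.mp (hw ▸ one_ne_zero)), sin_arg, sin_arg, hz, hw, Complex.inner]
    simp only [mul_re, conj_re, conj_im, div_one]
    ring
  rw [hcos, arccos_cos_eq_norm_addCircle_coe, AddCircle.coe_sub, dist_eq_norm]

theorem circle_spherical_code_bound_general (S : Set (EuclideanSpace ℝ (Fin 2))) (t : ℝ)
    (ht : 0 < t)
    (hunit : ∀ u ∈ S, ‖u‖ = 1)
    (hsep : ∀ u ∈ S, ∀ v ∈ S, u ≠ v → ⟪u, v⟫_ℝ ≤ 1 - t) :
    S.Finite ∧ (S.ncard : ℝ) ≤ 2 * Real.pi / Real.arccos (1 - t) := by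
  set θ := arccos (1 - t)
  have hθ : 0 < θ := arccos_pos.mpr (by linarith)
  let e := Complex.orthonormalBasisOneI.repr.symm
  let φ : EuclideanSpace ℝ (Fin 2) → AddCircle (2 * π) := fun u => (Complex.arg (e u) : ℝ)
  have hφ : S.Pairwise fun u v => θ ≤ dist (φ u) (φ v) := fun u hu v hv huv => by
    dsimp only [φ]
    rw [Complex.dist_coe_arg_eq_arccos_inner (by simpa using hunit u hu)
      (by simpa using hunit v hv), LinearIsometryEquiv.inner_map_map]
    exact arccos_le_arccos (hsep u hu v hv huv)
  have hinj : S.InjOn φ := fun u hu v hv huv => by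
    by_contra hne
    linarith [hφ hu hv hne, dist_le_zero.mpr huv]
  have : Fact (0 < 2 * π) := ⟨two_pi_pos⟩
  obtain ⟨hfin, hcard⟩ := AddCircle.finite_and_ncard_mul_le_of_pairwise_le_dist hθ
    ((arccos_le_pi _).trans (by linarith [pi_pos])) (hinj.pairwise_image.mpr hφ)
  refine ⟨(Set.finite_image_iff hinj).mp hfin, ?_⟩
  rwa [le_div_iff₀ hθ, ← hinj.ncard_image]

/-- A set of unit vectors on the unit circle in ℝ² with pairwise inner products at most
`1 − t` (for `t ∈ (0, 2]`) has cardinality at most `2π / arccos(1 − t)`. -/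
theorem circle_spherical_code_bound (S : Set (EuclideanSpace ℝ (Fin 2))) (t : ℝ)
    (ht : 0 < t) (ht2 : t ≤ 2)
    (hunit : ∀ u ∈ S, ‖u‖ = 1)
    (hsep : ∀ u ∈ S, ∀ v ∈ S, u ≠ v → ⟪u, v⟫_ℝ ≤ 1 - t) :
    S.Finite ∧ (S.ncard : ℝ) ≤ 2 * Real.pi / Real.arccos (1 - t) :=
  circle_spherical_code_bound_general S t ht hunit hsep
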